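/- arXiv:1609.03328 — 2 statements merged into one kernel-verified Lean document; each statement's English description precedes it below -/
import Mathlib

section
/- For every integer m ≥ 1 there exist constants K > 0 and δ > 0 such that if the starting point x₀ satisfies ‖x₀ − x*‖ ≤ δ, then the Shamanskii iterates x^{(0)} = x₀, x^{(j+1)} = S_m(x^{(j)}) are well defined (i.e., J(x^{(j)}) is invertible and all iterates remain in the ball of radius δ around x*) and converge to x* with order m+1: for every j, ‖x^{(j+1)} − x*‖ ≤ K‖x^{(j)} − x*‖^{m+1}. -/
open scoped RealInnerProductSpace

/-- Inner (chord) iterates with frozen matrix `A`: `y₀ = x`, `y_{k+1} = y_k − A⁻¹ F(y_k)`.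
If `A` is not invertible, `A.inverse = 0`. -/
noncomputable def chordIter {n : ℕ}
    (F : EuclideanSpace ℝ (Fin n) → EuclideanSpace ℝ (Fin n))
    (A : EuclideanSpace ℝ (Fin n) →L[ℝ] EuclideanSpace ℝ (Fin n))
    (x : EuclideanSpace ℝ (Fin n)) : ℕ → EuclideanSpace ℝ (Fin n)
  | 0 => x
  | k + 1 => chordIter F A x k - A.inverse (F (chordIter F A x k))

/-- Shamanskii `m`-step map: `m` chord steps with the Jacobian frozen at `x`. -/
noncomputable def shamanskii {n : ℕ} (m : ℕ)
    (F : EuclideanSpace ℝ (Fin n) → EuclideanSpace ℝ (Fin n))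
    (J : EuclideanSpace ℝ (Fin n) →
      (EuclideanSpace ℝ (Fin n) →L[ℝ] EuclideanSpace ℝ (Fin n)))
    (x : EuclideanSpace ℝ (Fin n)) : EuclideanSpace ℝ (Fin n) :=
  chordIter F (J x) x m

/-! Let `β` bound `‖J(xs)⁻¹‖`. Within distance `1/(8βγ)` of `xs` the Jacobian `J(x)` is a small
perturbation of `J(xs)`, hence invertible with `‖J(x)⁻¹‖ ≤ 2β`. A chord step with the frozen
Jacobian sends the error `e = y - xs` to `-J(x)⁻¹ (F y - F xs - J(x) e)`, and the mean value
inequality with the Lipschitz bound on `J` makes this at most `4βγ‖x - xs‖ · ‖e‖`. So the `m` chord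
steps of one Shamanskii step multiply the error by `(4βγ‖x - xs‖)^m ≤ 2^(-m)`: the error contracts,
the iterates stay in the ball, and the order is `m + 1`. -/

open scoped Ring

section NormedRing

variable {R : Type*} [NormedRing R] [HasSummableGeomSeries R]

theorem isUnit_of_norm_sub_mul_le {a b : R} (hb : IsUnit b) {β : ℝ} (hβ : ‖b⁻¹ʳ‖ ≤ β)
    (h : ‖a - b‖ * β ≤ 1 / 2) : IsUnit a := by
  have hsmall : ‖b⁻¹ʳ * (b - a)‖ < 1 := calc
    ‖b⁻¹ʳ * (b - a)‖ ≤ ‖b⁻¹ʳ‖ * ‖a - b‖ := (norm_mul_le _ _).trans_eq (by rw [norm_sub_rev])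
    _ ≤ ‖a - b‖ * β := by rw [mul_comm]; gcongr
    _ < 1 := by linarith
  have hfactor : a = b * (1 - b⁻¹ʳ * (b - a)) := by
    rw [mul_sub, mul_one, Ring.mul_inverse_cancel_left _ _ hb, sub_sub_cancel]
  rw [hfactor]
  exact hb.mul (isUnit_one_sub_of_norm_lt_one hsmall)

theorem norm_ringInverse_le_of_norm_sub_mul_le {a b : R} (hb : IsUnit b) {β : ℝ}
    (hβ : ‖b⁻¹ʳ‖ ≤ β) (h : ‖a - b‖ * β ≤ 1 / 2) : ‖a⁻¹ʳ‖ ≤ 2 * β := by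
  have ha := isUnit_of_norm_sub_mul_le hb hβ h
  have hresolvent : a⁻¹ʳ = b⁻¹ʳ - a⁻¹ʳ * (a - b) * b⁻¹ʳ := by
    rw [mul_sub, sub_mul, Ring.inverse_mul_cancel _ ha, Ring.mul_inverse_cancel_right _ _ hb,
      one_mul, sub_sub_cancel]
  have : ‖a⁻¹ʳ‖ ≤ β + ‖a⁻¹ʳ‖ / 2 := calc
    ‖a⁻¹ʳ‖ = ‖b⁻¹ʳ - a⁻¹ʳ * (a - b) * b⁻¹ʳ‖ := congrArg norm hresolvent
    _ ≤ ‖b⁻¹ʳ‖ + ‖a⁻¹ʳ‖ * ‖a - b‖ * ‖b⁻¹ʳ‖ := by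
      refine (norm_sub_le _ _).trans (add_le_add_right ((norm_mul_le _ _).trans ?_) _)
      gcongr
      exact norm_mul_le _ _
    _ ≤ β + ‖a⁻¹ʳ‖ * (‖a - b‖ * β) := by
      rw [mul_assoc]; gcongr
    _ ≤ β + ‖a⁻¹ʳ‖ / 2 := by
      nlinarith [norm_nonneg a⁻¹ʳ]
  linarith

end NormedRing

section MeanValue

variable {E G : Type*} [NormedAddCommGroup E] [NormedSpace ℝ E]
  [NormedAddCommGroup G] [NormedSpace ℝ G]

theorem norm_sub_sub_apply_le_of_fderiv_lipschitz {F : E → G} {J : E → E →L[ℝ] G}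
    (hJ : ∀ x, HasFDerivAt F (J x) x) {γ : ℝ} (hγ : 0 ≤ γ)
    (hLip : ∀ x y, ‖J x - J y‖ ≤ γ * ‖x - y‖) (x y z : E) :
    ‖F y - F z - J x (y - z)‖ ≤ γ * (‖y - z‖ + ‖x - z‖) * ‖y - z‖ := by
  have hJ_segment : ∀ w ∈ segment ℝ z y, ‖J w - J x‖ ≤ γ * (‖y - z‖ + ‖x - z‖) := by
    intro w hw
    have hwz : ‖w - z‖ ≤ ‖y - z‖ := by
      have := dist_add_dist_of_mem_segment hw
      rw [dist_comm z w, dist_comm z y] at this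
      simp only [dist_eq_norm] at this
      linarith [norm_nonneg (w - y)]
    calc ‖J w - J x‖ ≤ γ * ‖w - x‖ := hLip w x
      _ ≤ γ * (‖y - z‖ + ‖x - z‖) := by
        gcongr
        exact (norm_sub_le_norm_sub_add_norm_sub w z x).trans
          (add_le_add hwz (norm_sub_rev z x).le)
  exact (convex_segment z y).norm_image_sub_le_of_norm_hasFDerivWithin_le'
    (fun w _ => (hJ w).hasFDerivWithinAt) hJ_segment
    (left_mem_segment ℝ z y) (right_mem_segment ℝ z y)

end MeanValue

theorem ContinuousLinearMap.isUnit_of_inner_pos {E : Type*} [NormedAddCommGroup E]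
    [InnerProductSpace ℝ E] [FiniteDimensional ℝ E] {T : E →L[ℝ] E}
    (hT : ∀ v, v ≠ 0 → 0 < ⟪v, T v⟫) : IsUnit T := by
  have hinj : Function.Injective T := by
    refine (injective_iff_map_eq_zero T).mpr fun v hv => ?_
    by_contra hne
    simpa [hv] using hT v hne
  exact T.isUnit_iff_bijective.mpr
    ⟨hinj, LinearMap.injective_iff_surjective (f := (T : E →ₗ[ℝ] E)).mp hinj⟩

section Chord

variable {E : Type*} [NormedAddCommGroup E] [NormedSpace ℝ E] {F : E → E} {J : E → E →L[ℝ] E}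
  {γ β : ℝ} {xs x : E}

theorem norm_chord_step_sub_le (hJ : ∀ x, HasFDerivAt F (J x) x) (hγ : 0 ≤ γ)
    (hLip : ∀ x y, ‖J x - J y‖ ≤ γ * ‖x - y‖) (hroot : F xs = 0) (hx : IsUnit (J x))
    (hβ : ‖(J x)⁻¹ʳ‖ ≤ β) (y : E) :
    ‖y - (J x).inverse (F y) - xs‖ ≤ β * γ * (‖y - xs‖ + ‖x - xs‖) * ‖y - xs‖ := by
  have hstep : y - (J x).inverse (F y) - xs = -(J x)⁻¹ʳ (F y - F xs - J x (y - xs)) := by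
    have hcancel : (J x)⁻¹ʳ (J x (y - xs)) = y - xs :=
      congrArg (· (y - xs)) (Ring.inverse_mul_cancel _ hx)
    rw [← ContinuousLinearMap.ringInverse_eq_inverse, hroot, sub_zero, map_sub, hcancel]
    abel
  calc ‖y - (J x).inverse (F y) - xs‖ ≤ ‖(J x)⁻¹ʳ‖ * ‖F y - F xs - J x (y - xs)‖ := by
        rw [hstep, norm_neg]; exact ContinuousLinearMap.le_opNorm _ _
    _ ≤ β * (γ * (‖y - xs‖ + ‖x - xs‖) * ‖y - xs‖) := by
        gcongr
        · exact (norm_nonneg _).trans hβ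
        · exact norm_sub_sub_apply_le_of_fderiv_lipschitz hJ hγ hLip x y xs
    _ = β * γ * (‖y - xs‖ + ‖x - xs‖) * ‖y - xs‖ := by ring

end Chord

theorem norm_chordIter_sub_le {n : ℕ} {F : EuclideanSpace ℝ (Fin n) → EuclideanSpace ℝ (Fin n)}
    {J : EuclideanSpace ℝ (Fin n) → EuclideanSpace ℝ (Fin n) →L[ℝ] EuclideanSpace ℝ (Fin n)}
    {γ β : ℝ} {xs x : EuclideanSpace ℝ (Fin n)}
    (hJ : ∀ x, HasFDerivAt F (J x) x) (hγ : 0 ≤ γ)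
    (hLip : ∀ x y, ‖J x - J y‖ ≤ γ * ‖x - y‖) (hroot : F xs = 0) (hx : IsUnit (J x))
    (hβ : ‖(J x)⁻¹ʳ‖ ≤ β) (hq : 2 * β * γ * ‖x - xs‖ ≤ 1) (k : ℕ) :
    ‖chordIter F (J x) x k - xs‖ ≤ (2 * β * γ * ‖x - xs‖) ^ k * ‖x - xs‖ := by
  set d := ‖x - xs‖
  set q := 2 * β * γ * d
  have hβ0 : 0 ≤ β := (norm_nonneg _).trans hβ
  have hq0 : 0 ≤ q := by positivity
  induction k with
  | zero => simp [chordIter, d]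
  | succ k ih =>
    set y := chordIter F (J x) x k
    have hyd : ‖y - xs‖ ≤ d :=
      ih.trans (mul_le_of_le_one_left (norm_nonneg _) (pow_le_one₀ hq0 hq))
    calc ‖chordIter F (J x) x (k + 1) - xs‖
        ≤ β * γ * (‖y - xs‖ + d) * ‖y - xs‖ :=
          norm_chord_step_sub_le hJ hγ hLip hroot hx hβ y
      _ ≤ β * γ * (d + d) * ‖y - xs‖ := by gcongr
      _ = q * ‖y - xs‖ := by ring
      _ ≤ q * (q ^ k * d) := by gcongr
      _ = q ^ (k + 1) * d := by ring

theorem norm_shamanskii_sub_le {n : ℕ} {F : EuclideanSpace ℝ (Fin n) → EuclideanSpace ℝ (Fin n)}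
    {J : EuclideanSpace ℝ (Fin n) → EuclideanSpace ℝ (Fin n) →L[ℝ] EuclideanSpace ℝ (Fin n)}
    {γ β : ℝ} {xs x : EuclideanSpace ℝ (Fin n)}
    (hJ : ∀ x, HasFDerivAt F (J x) x) (hγ : 0 ≤ γ)
    (hLip : ∀ x y, ‖J x - J y‖ ≤ γ * ‖x - y‖) (hroot : F xs = 0) (hxs : IsUnit (J xs))
    (hβ : ‖(J xs)⁻¹ʳ‖ ≤ β) (hx : 8 * β * γ * ‖x - xs‖ ≤ 1) (m : ℕ) :
    IsUnit (J x) ∧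
      ‖shamanskii m F J x - xs‖ ≤ (4 * β * γ * ‖x - xs‖) ^ m * ‖x - xs‖ := by
  have hβ0 : 0 ≤ β := (norm_nonneg _).trans hβ
  have hnear : ‖J x - J xs‖ * β ≤ 1 / 2 := calc
    ‖J x - J xs‖ * β ≤ γ * ‖x - xs‖ * β := by gcongr; exact hLip x xs
    _ ≤ 1 / 2 := by nlinarith [norm_nonneg (x - xs), mul_nonneg hγ hβ0]
  have hx_unit := isUnit_of_norm_sub_mul_le hxs hβ hnear
  refine ⟨hx_unit, ?_⟩
  have hchord := norm_chordIter_sub_le hJ hγ hLip hroot hx_unit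
    (norm_ringInverse_le_of_norm_sub_mul_le hxs hβ hnear) (by linarith) m
  rwa [show 2 * (2 * β) * γ = 4 * β * γ by ring] at hchord

section Contracting

variable {α : Type*} [PseudoMetricSpace α] {f : α → α} {p x₀ : α} {δ c : ℝ}

theorem dist_iterate_le_pow_mul (hc0 : 0 ≤ c) (hc1 : c ≤ 1)
    (hf : ∀ x, dist x p ≤ δ → dist (f x) p ≤ c * dist x p) (hx₀ : dist x₀ p ≤ δ) (j : ℕ) :
    dist (f^[j] x₀) p ≤ c ^ j * dist x₀ p := by
  induction j with
  | zero => simp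
  | succ j ih =>
    have hball : dist (f^[j] x₀) p ≤ δ :=
      (ih.trans (mul_le_of_le_one_left dist_nonneg (pow_le_one₀ hc0 hc1))).trans hx₀
    calc dist (f^[j + 1] x₀) p ≤ c * dist (f^[j] x₀) p := by
          rw [Function.iterate_succ_apply']; exact hf _ hball
      _ ≤ c * (c ^ j * dist x₀ p) := by gcongr
      _ = c ^ (j + 1) * dist x₀ p := by ring

theorem dist_iterate_le_of_dist_le_mul (hc0 : 0 ≤ c) (hc1 : c ≤ 1)
    (hf : ∀ x, dist x p ≤ δ → dist (f x) p ≤ c * dist x p) (hx₀ : dist x₀ p ≤ δ) (j : ℕ) :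
    dist (f^[j] x₀) p ≤ δ :=
  ((dist_iterate_le_pow_mul hc0 hc1 hf hx₀ j).trans
    (mul_le_of_le_one_left dist_nonneg (pow_le_one₀ hc0 hc1))).trans hx₀

theorem tendsto_iterate_of_dist_le_mul (hc0 : 0 ≤ c) (hc1 : c < 1)
    (hf : ∀ x, dist x p ≤ δ → dist (f x) p ≤ c * dist x p) (hx₀ : dist x₀ p ≤ δ) :
    Filter.Tendsto (fun j => f^[j] x₀) Filter.atTop (nhds p) := by
  refine tendsto_iff_dist_tendsto_zero.mpr
    (squeeze_zero (fun _ => dist_nonneg) (dist_iterate_le_pow_mul hc0 hc1.le hf hx₀) ?_)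
  simpa using (tendsto_pow_atTop_nhds_zero_of_lt_one hc0 hc1).mul_const (dist x₀ p)

end Contracting

theorem shamanskii_convergence_order (n : ℕ)
    (F : EuclideanSpace ℝ (Fin n) → EuclideanSpace ℝ (Fin n))
    (J : EuclideanSpace ℝ (Fin n) →
      (EuclideanSpace ℝ (Fin n) →L[ℝ] EuclideanSpace ℝ (Fin n)))
    (hJ : ∀ x, HasFDerivAt F (J x) x)
    (xs : EuclideanSpace ℝ (Fin n)) (hroot : F xs = 0)
    (γ : ℝ) (hγ : 0 < γ)
    (hLip : ∀ x y, ‖J x - J y‖ ≤ γ * ‖x - y‖)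
    (hpos : ∀ v : EuclideanSpace ℝ (Fin n), v ≠ 0 → 0 < ⟪v, (J xs) v⟫)
    (m : ℕ) (hm : 1 ≤ m) :
    ∃ K > (0 : ℝ), ∃ δ > (0 : ℝ),
      ∀ x₀ : EuclideanSpace ℝ (Fin n), ‖x₀ - xs‖ ≤ δ →
        (∀ j : ℕ,
            IsUnit (J ((shamanskii m F J)^[j] x₀)) ∧
            ‖(shamanskii m F J)^[j] x₀ - xs‖ ≤ δ ∧
            ‖(shamanskii m F J)^[j + 1] x₀ - xs‖ ≤
              K * ‖(shamanskii m F J)^[j] x₀ - xs‖ ^ (m + 1)) ∧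
        Filter.Tendsto (fun j => (shamanskii m F J)^[j] x₀) Filter.atTop (nhds xs) := by
  set β := ‖(J xs)⁻¹ʳ‖ + 1
  have hβ : 0 < β := by positivity
  set δ := 1 / (8 * β * γ)
  have hstep : ∀ x, dist x xs ≤ δ → IsUnit (J x) ∧
      ‖shamanskii m F J x - xs‖ ≤ (4 * β * γ * ‖x - xs‖) ^ m * ‖x - xs‖ := fun x hx =>
    norm_shamanskii_sub_le hJ hγ.le hLip hroot (ContinuousLinearMap.isUnit_of_inner_pos hpos)
      (le_add_of_nonneg_right zero_le_one)
      (by rw [dist_eq_norm, le_div_iff₀' (by positivity)] at hx; exact hx) m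
  have hhalf : ∀ x, dist x xs ≤ δ → dist (shamanskii m F J x) xs ≤ 1 / 2 * dist x xs := by
    intro x hx
    have hq : 4 * β * γ * dist x xs ≤ 1 / 2 := by
      rw [le_div_iff₀' (by positivity)] at hx; linarith
    simp only [dist_eq_norm] at hx hq ⊢
    calc ‖shamanskii m F J x - xs‖ ≤ (4 * β * γ * ‖x - xs‖) ^ m * ‖x - xs‖ := (hstep x hx).2
      _ ≤ (1 / 2) ^ m * ‖x - xs‖ := by gcongr
      _ ≤ 1 / 2 * ‖x - xs‖ := by
        gcongr; exact pow_le_of_le_one (by norm_num) (by norm_num) (by omega)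
  refine ⟨(4 * β * γ) ^ m, by positivity, δ, by positivity, fun x₀ hx₀ => ?_⟩
  rw [← dist_eq_norm] at hx₀
  have hstay := dist_iterate_le_of_dist_le_mul (by norm_num) (by norm_num) hhalf hx₀
  refine ⟨fun j => ?_, tendsto_iterate_of_dist_le_mul (by norm_num) (by norm_num) hhalf hx₀⟩
  obtain ⟨hunit, hbound⟩ := hstep _ (hstay j)
  refine ⟨hunit, dist_eq_norm _ xs ▸ hstay j, ?_⟩
  rw [Function.iterate_succ_apply']
  exact hbound.trans_eq (by rw [mul_pow, pow_succ]; ring)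
end

section
/- There exist constants C > 0 and δ > 0 such that for all x, y with ‖x − x*‖ ≤ δ and ‖y − x*‖ ≤ δ, the matrix J(x) is invertible and the chord step with Jacobian frozen at x satisfies ‖y − J(x)⁻¹F(y) − x*‖ ≤ C(‖x − x*‖ + ‖y − x*‖)‖y − x*‖. -/
open scoped RealInnerProductSpace
open Filter Topology

/-!
With `A = J x` and `F x* = 0`, the chord step error is `-A⁻¹ (F y - F x* - A (y - x*))`.
Integrating the Lipschitz bound `‖J z - J x‖ ≤ γ (‖x - x*‖ + ‖y - x*‖)` along the segment
from `x*` to `y` bounds the bracket by `γ (‖x - x*‖ + ‖y - x*‖) ‖y - x*‖`, and `‖A⁻¹‖` stays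
bounded near `x*` since `J` is continuous, `J x*` is a unit (positive definite in finite
dimension) and inversion is continuous on the units of a Banach algebra.
-/

theorem ContinuousLinearMap.isUnit_of_forall_inner_map_pos {E : Type*} [NormedAddCommGroup E]
    [InnerProductSpace ℝ E] [FiniteDimensional ℝ E] (A : E →L[ℝ] E)
    (hA : ∀ v, v ≠ 0 → 0 < ⟪v, A v⟫) : IsUnit A := by
  have hinj : Function.Injective A := (injective_iff_map_eq_zero A).2 fun v hv ↦
    by_contra fun hne ↦ by simpa [hv] using hA v hne
  exact A.isUnit_iff_bijective.2 ⟨hinj, LinearMap.injective_iff_surjective.1 hinj⟩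

theorem ContinuousAt.eventually_isUnit_and_norm_ringInverse_le {X R : Type*} [TopologicalSpace X]
    [NormedRing R] [CompleteSpace R] {f : X → R} {a : X} (hf : ContinuousAt f a)
    (ha : IsUnit (f a)) :
    ∀ᶠ x in 𝓝 a, IsUnit (f x) ∧ ‖Ring.inverse (f x)‖ ≤ ‖Ring.inverse (f a)‖ + 1 := by
  have hinv : ContinuousAt (fun x ↦ Ring.inverse (f x)) a := by
    have := NormedRing.inverse_continuousAt ha.unit
    rw [IsUnit.unit_spec] at this
    exact this.comp hf
  filter_upwards [hf (Units.isOpen.mem_nhds ha),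
    hinv.norm.eventually_lt continuousAt_const (lt_add_one _)] with x hunit hnorm
  exact ⟨hunit, hnorm.le⟩

theorem norm_sub_sub_apply_le_of_norm_fderiv_sub_le {E F : Type*} [NormedAddCommGroup E]
    [NormedSpace ℝ E] [NormedAddCommGroup F] [NormedSpace ℝ F] {f : E → F} {f' : E → E →L[ℝ] F}
    {γ : ℝ} (hf : ∀ x, HasFDerivAt f (f' x) x) (hγ : 0 ≤ γ)
    (hLip : ∀ x y, ‖f' x - f' y‖ ≤ γ * ‖x - y‖) (x a y : E) :
    ‖f y - f a - f' x (y - a)‖ ≤ γ * (‖x - a‖ + ‖y - a‖) * ‖y - a‖ := by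
  refine Convex.norm_image_sub_le_of_norm_hasFDerivWithin_le' (fun z _ ↦ (hf z).hasFDerivWithinAt)
    (fun z hz ↦ ?_) (convex_segment a y) (left_mem_segment ℝ a y) (right_mem_segment ℝ a y)
  have hza : ‖z - a‖ ≤ ‖y - a‖ := by
    have := dist_add_dist_of_mem_segment hz
    simp only [dist_eq_norm'] at this
    linarith [norm_nonneg (y - z)]
  calc ‖f' z - f' x‖ ≤ γ * ‖z - x‖ := hLip z x
    _ ≤ γ * (‖x - a‖ + ‖y - a‖) := by
      gcongr
      linarith [norm_sub_le_norm_sub_add_norm_sub z a x, norm_sub_rev a x]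

theorem norm_sub_ringInverse_apply_sub_le {𝕜 E : Type*} [NontriviallyNormedField 𝕜]
    [NormedAddCommGroup E] [NormedSpace 𝕜 E] {A : E →L[𝕜] E} (hA : IsUnit A) {f : E → E} {a : E}
    (ha : f a = 0) (y : E) :
    ‖y - Ring.inverse A (f y) - a‖ ≤ ‖Ring.inverse A‖ * ‖f y - f a - A (y - a)‖ := by
  have hya : Ring.inverse A (A (y - a)) = y - a := by
    rw [← mul_apply_eq_comp, Ring.inverse_mul_cancel A hA, one_apply_eq_self]
  have hstep : y - Ring.inverse A (f y) - a = -Ring.inverse A (f y - f a - A (y - a)) := by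
    rw [ha, sub_zero, map_sub, hya]
    abel
  rw [hstep, norm_neg]
  exact (Ring.inverse A).le_opNorm _

theorem chord_step_estimate (n : ℕ)
    (F : EuclideanSpace ℝ (Fin n) → EuclideanSpace ℝ (Fin n))
    (J : EuclideanSpace ℝ (Fin n) →
      (EuclideanSpace ℝ (Fin n) →L[ℝ] EuclideanSpace ℝ (Fin n)))
    (hJ : ∀ x, HasFDerivAt F (J x) x)
    (xs : EuclideanSpace ℝ (Fin n)) (hroot : F xs = 0)
    (γ : ℝ) (hγ : 0 < γ)
    (hLip : ∀ x y, ‖J x - J y‖ ≤ γ * ‖x - y‖)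
    (hpos : ∀ v : EuclideanSpace ℝ (Fin n), v ≠ 0 → 0 < ⟪v, (J xs) v⟫) :
    ∃ C > (0 : ℝ), ∃ δ > (0 : ℝ),
      ∀ x y : EuclideanSpace ℝ (Fin n), ‖x - xs‖ ≤ δ → ‖y - xs‖ ≤ δ →
        IsUnit (J x) ∧
        ‖y - (J x).inverse (F y) - xs‖ ≤ C * (‖x - xs‖ + ‖y - xs‖) * ‖y - xs‖ := by
  have hJcont : Continuous J :=
    (LipschitzWith.of_dist_le_mul (K := ⟨γ, hγ.le⟩) fun x y ↦ by
      rw [dist_eq_norm, dist_eq_norm]; exact hLip x y).continuous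
  obtain ⟨ε, hε, hball⟩ := Metric.eventually_nhds_iff_ball.1 <|
    hJcont.continuousAt.eventually_isUnit_and_norm_ringInverse_le
      ((J xs).isUnit_of_forall_inner_map_pos hpos)
  set M := ‖Ring.inverse (J xs)‖ + 1
  refine ⟨γ * M, by positivity, ε / 2, by positivity, fun x y hx hy ↦ ?_⟩
  obtain ⟨hunit, hM⟩ := hball x (by rw [Metric.mem_ball, dist_eq_norm]; linarith)
  refine ⟨hunit, ?_⟩
  rw [← ContinuousLinearMap.ringInverse_eq_inverse]
  calc ‖y - Ring.inverse (J x) (F y) - xs‖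
      ≤ ‖Ring.inverse (J x)‖ * ‖F y - F xs - J x (y - xs)‖ :=
        norm_sub_ringInverse_apply_sub_le hunit hroot y
    _ ≤ M * (γ * (‖x - xs‖ + ‖y - xs‖) * ‖y - xs‖) := by
        gcongr
        exact norm_sub_sub_apply_le_of_norm_fderiv_sub_le hJ hγ.le hLip x xs y
    _ = γ * M * (‖x - xs‖ + ‖y - xs‖) * ‖y - xs‖ := by ring
end
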